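/- In ⊗³ 𝕂⁶, the sequence of tensors y_n := n(e₁ + (1/n)e₄) ∨ (e₂ + (1/n)e₅) ∨ (e₃ + (1/n)e₆) − n·e₁ ∨ e₂ ∨ e₃, each of symmetric decomposable rank at most 2, converges (in any norm on the finite-dimensional space ⊗³ 𝕂⁶) to y := e₁ ∨ e₂ ∨ e₆ + e₁ ∨ e₃ ∨ e₅ + e₂ ∨ e₃ ∨ e₄; explicitly, y_n − y = (1/n)(e₃ ∨ e₄ ∨ e₅ + e₂ ∨ e₄ ∨ e₆ + e₁ ∨ e₅ ∨ e₆) + (1/n²) e₄ ∨ e₅ ∨ e₆. -/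

import Mathlib

open scoped BigOperators

/-- The linear map permuting tensor factors: `(permLin η z) j = z (j ∘ η)`. -/
noncomputable def permLin (𝕜 : Type*) [RCLike 𝕜] (d n : ℕ) (η : Equiv.Perm (Fin d)) :
    EuclideanSpace 𝕜 (Fin d → Fin n) →ₗ[𝕜] EuclideanSpace 𝕜 (Fin d → Fin n) where
  toFun z := WithLp.toLp 2 (fun j => z (j ∘ η))
  map_add' _ _ := rfl
  map_smul' _ _ := rfl

/-- A tensor is symmetric if it is invariant under all permutations of factors. -/
def IsSymTensor {𝕜 : Type*} [RCLike 𝕜] {d n : ℕ}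
    (z : EuclideanSpace 𝕜 (Fin d → Fin n)) : Prop :=
  ∀ η : Equiv.Perm (Fin d), permLin 𝕜 d n η z = z

/-- The elementary tensor `x 1 ⊗ ⋯ ⊗ x d`. -/
noncomputable def eTensor {𝕜 : Type*} [RCLike 𝕜] {d n : ℕ}
    (x : Fin d → EuclideanSpace 𝕜 (Fin n)) : EuclideanSpace 𝕜 (Fin d → Fin n) :=
  WithLp.toLp 2 (fun (j : Fin d → Fin n) => ∏ i, x i (j i))

/-- The symmetrization operator `σ`. -/
noncomputable def symmetrize {𝕜 : Type*} [RCLike 𝕜] {d n : ℕ}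
    (z : EuclideanSpace 𝕜 (Fin d → Fin n)) : EuclideanSpace 𝕜 (Fin d → Fin n) :=
  ((d.factorial : 𝕜)⁻¹) • ∑ η : Equiv.Perm (Fin d), permLin 𝕜 d n η z

/-- The decomposable symmetric tensor `x 1 ∨ ⋯ ∨ x d`. -/
noncomputable def vee {𝕜 : Type*} [RCLike 𝕜] {d n : ℕ}
    (x : Fin d → EuclideanSpace 𝕜 (Fin n)) : EuclideanSpace 𝕜 (Fin d → Fin n) :=
  symmetrize (eTensor x)

/-- The tensor rank. -/
noncomputable def tensorRank {𝕜 : Type*} [RCLike 𝕜] {d n : ℕ}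
    (z : EuclideanSpace 𝕜 (Fin d → Fin n)) : ℕ :=
  sInf {r : ℕ | ∃ v : Fin r → Fin d → EuclideanSpace 𝕜 (Fin n), z = ∑ i, eTensor (v i)}

/-- The symmetric decomposable rank. -/
noncomputable def symDecRank {𝕜 : Type*} [RCLike 𝕜] {d n : ℕ}
    (z : EuclideanSpace 𝕜 (Fin d → Fin n)) : ℕ :=
  sInf {r : ℕ | ∃ v : Fin r → Fin d → EuclideanSpace 𝕜 (Fin n), z = ∑ i, vee (v i)}

/-- The injective (spectral) norm. -/
noncomputable def injNorm {𝕜 : Type*} [RCLike 𝕜] {d n : ℕ}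
    (z : EuclideanSpace 𝕜 (Fin d → Fin n)) : ℝ :=
  sSup {c : ℝ | ∃ y : Fin d → EuclideanSpace 𝕜 (Fin n),
    (∀ i, ‖y i‖ = 1) ∧ c = ‖(inner 𝕜 (eTensor y) z : 𝕜)‖}

/-- The projective (nuclear) norm. -/
noncomputable def projNorm {𝕜 : Type*} [RCLike 𝕜] {d n : ℕ}
    (z : EuclideanSpace 𝕜 (Fin d → Fin n)) : ℝ :=
  sInf {c : ℝ | ∃ (r : ℕ) (v : Fin r → Fin d → EuclideanSpace 𝕜 (Fin n)),
    z = ∑ i, eTensor (v i) ∧ c = ∑ i, ∏ j, ‖v i j‖}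

/-! With `t = 1/n`, trilinearity gives
`n ((a + t a') ∨ (b + t b') ∨ (c + t c') − a ∨ b ∨ c) = (a' ∨ b ∨ c + a ∨ b' ∨ c + a ∨ b ∨ c')
  + t (a' ∨ b' ∨ c + a' ∨ b ∨ c' + a ∨ b' ∨ c') + t² a' ∨ b' ∨ c'`,
a difference quotient of `∨` converging to its derivative at `(a, b, c)` in direction
`(a', b', c')`, which is `y` for `(a, b, c) = (e₁, e₂, e₃)` and `(a', b', c') = (e₄, e₅, e₆)`.
Each `yₙ` has symmetric decomposable rank at most 2 because the scalars `±n` can be absorbed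
into one factor. -/

open Filter Topology

section Symmetrization

variable {𝕜 : Type*} [RCLike 𝕜] {d n : ℕ}

lemma permLin_permLin (σ η : Equiv.Perm (Fin d)) (z : EuclideanSpace 𝕜 (Fin d → Fin n)) :
    permLin 𝕜 d n σ (permLin 𝕜 d n η z) = permLin 𝕜 d n (σ * η) z := rfl

lemma symmetrize_permLin (η : Equiv.Perm (Fin d)) (z : EuclideanSpace 𝕜 (Fin d → Fin n)) :
    symmetrize (permLin 𝕜 d n η z) = symmetrize z := by
  simp only [symmetrize, permLin_permLin]
  congr 1
  exact Fintype.sum_equiv (Equiv.mulRight η) _ _ fun σ => rfl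

lemma symmetrize_add (z w : EuclideanSpace 𝕜 (Fin d → Fin n)) :
    symmetrize (z + w) = symmetrize z + symmetrize w := by
  simp only [symmetrize, map_add, Finset.sum_add_distrib, smul_add]

lemma symmetrize_smul (c : 𝕜) (z : EuclideanSpace 𝕜 (Fin d → Fin n)) :
    symmetrize (c • z) = c • symmetrize z := by
  simp only [symmetrize, map_smul, ← Finset.smul_sum]
  exact smul_comm _ _ _

lemma eTensor_comp_perm (x : Fin d → EuclideanSpace 𝕜 (Fin n)) (η : Equiv.Perm (Fin d)) :
    eTensor (x ∘ η) = permLin 𝕜 d n η⁻¹ (eTensor x) := by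
  ext j
  change ∏ i, x (η i) (j i) = ∏ i, x i (j (η⁻¹ i))
  rw [← Equiv.prod_comp η fun i => x i (j (η⁻¹ i))]
  simp

lemma vee_comp_perm (x : Fin d → EuclideanSpace 𝕜 (Fin n)) (η : Equiv.Perm (Fin d)) :
    vee (x ∘ η) = vee x := by
  rw [vee, eTensor_comp_perm, symmetrize_permLin, vee]

lemma eTensor_vecCons_add (a b : EuclideanSpace 𝕜 (Fin n))
    (x : Fin d → EuclideanSpace 𝕜 (Fin n)) :
    eTensor (Matrix.vecCons (a + b) x) =
      eTensor (Matrix.vecCons a x) + eTensor (Matrix.vecCons b x) := by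
  ext j
  simp [eTensor, Fin.prod_univ_succ, add_mul]

lemma eTensor_vecCons_smul (t : 𝕜) (a : EuclideanSpace 𝕜 (Fin n))
    (x : Fin d → EuclideanSpace 𝕜 (Fin n)) :
    eTensor (Matrix.vecCons (t • a) x) = t • eTensor (Matrix.vecCons a x) := by
  ext j
  simp [eTensor, Fin.prod_univ_succ, mul_assoc]

lemma vee_vecCons_add (a b : EuclideanSpace 𝕜 (Fin n)) (x : Fin d → EuclideanSpace 𝕜 (Fin n)) :
    vee (Matrix.vecCons (a + b) x) = vee (Matrix.vecCons a x) + vee (Matrix.vecCons b x) := by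
  simp only [vee, eTensor_vecCons_add, symmetrize_add]

lemma vee_vecCons_smul (t : 𝕜) (a : EuclideanSpace 𝕜 (Fin n))
    (x : Fin d → EuclideanSpace 𝕜 (Fin n)) :
    vee (Matrix.vecCons (t • a) x) = t • vee (Matrix.vecCons a x) := by
  simp only [vee, eTensor_vecCons_smul, symmetrize_smul]

lemma smul_vee_sub_smul_vee (s : 𝕜) (a a' : EuclideanSpace 𝕜 (Fin n))
    (x x' : Fin d → EuclideanSpace 𝕜 (Fin n)) :
    s • vee (Matrix.vecCons a x) - s • vee (Matrix.vecCons a' x') =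
      vee (Matrix.vecCons (s • a) x) + vee (Matrix.vecCons ((-s) • a') x') := by
  rw [vee_vecCons_smul, vee_vecCons_smul, neg_smul, ← sub_eq_add_neg]

end Symmetrization

section ThreeFactors

variable {𝕜 : Type*} [RCLike 𝕜] {n : ℕ} (a a' b b' c c' : EuclideanSpace 𝕜 (Fin n)) (t : 𝕜)

lemma vee_swap_left : vee ![b, a, c] = vee ![a, b, c] := by
  have h : ![b, a, c] = ![a, b, c] ∘ Equiv.swap (0 : Fin 3) 1 := by
    ext i : 1; fin_cases i <;> rfl
  rw [h, vee_comp_perm]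

lemma vee_rotate : vee ![b, c, a] = vee ![a, b, c] := by
  have h : ![b, c, a] = ![a, b, c] ∘ finRotate 3 := by
    ext i : 1; fin_cases i <;> rfl
  rw [h, vee_comp_perm]

lemma vee_swap_right : vee ![a, c, b] = vee ![a, b, c] := by
  rw [← vee_rotate, vee_swap_left, vee_rotate]

lemma vee_add_smul_fst : vee ![a + t • a', b, c] = vee ![a, b, c] + t • vee ![a', b, c] := by
  rw [vee_vecCons_add, vee_vecCons_smul]

lemma vee_add_smul_snd : vee ![a, b + t • b', c] = vee ![a, b, c] + t • vee ![a, b', c] := by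
  rw [← vee_swap_left a, vee_add_smul_fst, vee_swap_left a b c, vee_swap_left a b' c]

lemma vee_add_smul_thd : vee ![a, b, c + t • c'] = vee ![a, b, c] + t • vee ![a, b, c'] := by
  rw [vee_rotate (c + t • c'), vee_add_smul_fst, ← vee_rotate c, ← vee_rotate c']

lemma smul_vee_add_inv_smul_sub {s : 𝕜} (hs : s ≠ 0) :
    s • vee ![a + s⁻¹ • a', b + s⁻¹ • b', c + s⁻¹ • c'] - s • vee ![a, b, c] =
      (vee ![a', b, c] + vee ![a, b', c] + vee ![a, b, c'])
      + s⁻¹ • (vee ![a', b', c] + vee ![a', b, c'] + vee ![a, b', c'])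
      + (s ^ 2)⁻¹ • vee ![a', b', c'] := by
  simp only [vee_add_smul_fst, vee_add_smul_snd, vee_add_smul_thd]
  match_scalars <;> field_simp
  ring

lemma tendsto_natCast_smul_vee_add_inv_smul_sub :
    Tendsto (fun m : ℕ => (m : 𝕜) • vee ![a + (m : 𝕜)⁻¹ • a', b + (m : 𝕜)⁻¹ • b',
        c + (m : 𝕜)⁻¹ • c'] - (m : 𝕜) • vee ![a, b, c])
      atTop (𝓝 (vee ![a', b, c] + vee ![a, b', c] + vee ![a, b, c'])) := by
  have hinv : Tendsto (fun m : ℕ => (m : 𝕜)⁻¹) atTop (𝓝 0) := tendsto_inv_atTop_nhds_zero_nat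
  have hsq : Tendsto (fun m : ℕ => ((m : 𝕜) ^ 2)⁻¹) atTop (𝓝 0) := by
    simpa [inv_pow] using hinv.pow 2
  have hlim := (tendsto_const_nhds (x := vee ![a', b, c] + vee ![a, b', c] + vee ![a, b, c'])).add
    ((hinv.smul_const (vee ![a', b', c] + vee ![a', b, c'] + vee ![a, b', c'])).add
      (hsq.smul_const (vee ![a', b', c'])))
  rw [zero_smul, zero_smul, add_zero, add_zero] at hlim
  refine hlim.congr' ((eventually_ne_atTop 0).mono fun m hm => ?_)
  exact ((smul_vee_add_inv_smul_sub _ _ _ _ _ _ (Nat.cast_ne_zero.2 hm)).trans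
    (add_assoc _ _ _)).symm

end ThreeFactors

/-- In `⊗³ 𝕂⁶` the tensors
`yₙ = n(e₁ + (1/n)e₄) ∨ (e₂ + (1/n)e₅) ∨ (e₃ + (1/n)e₆) − n e₁ ∨ e₂ ∨ e₃`, each of symmetric
decomposable rank at most 2, converge to `y = e₁ ∨ e₂ ∨ e₆ + e₁ ∨ e₃ ∨ e₅ + e₂ ∨ e₃ ∨ e₄`;
explicitly `yₙ − y = (1/n)(e₃∨e₄∨e₅ + e₂∨e₄∨e₆ + e₁∨e₅∨e₆) + (1/n²) e₄∨e₅∨e₆`. -/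
theorem symDecRank_two_approx_sequence
    {𝕜 : Type*} [RCLike 𝕜] :
    letI e : Fin 6 → EuclideanSpace 𝕜 (Fin 6) := fun i => EuclideanSpace.single i 1
    letI yseq : ℕ → EuclideanSpace 𝕜 (Fin 3 → Fin 6) := fun m =>
      (m : 𝕜) • vee ![e 0 + ((m : 𝕜))⁻¹ • e 3, e 1 + ((m : 𝕜))⁻¹ • e 4,
        e 2 + ((m : 𝕜))⁻¹ • e 5] - (m : 𝕜) • vee ![e 0, e 1, e 2]
    letI y : EuclideanSpace 𝕜 (Fin 3 → Fin 6) :=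
      vee ![e 0, e 1, e 5] + vee ![e 0, e 2, e 4] + vee ![e 1, e 2, e 3]
    (∀ m : ℕ, ∃ a b : Fin 3 → EuclideanSpace 𝕜 (Fin 6), yseq m = vee a + vee b) ∧
    (∀ m : ℕ, 1 ≤ m →
      yseq m - y = ((m : 𝕜))⁻¹ •
          (vee ![e 2, e 3, e 4] + vee ![e 1, e 3, e 5] + vee ![e 0, e 4, e 5])
        + (((m : 𝕜)) ^ 2)⁻¹ • vee ![e 3, e 4, e 5]) ∧
    Tendsto yseq atTop (𝓝 y) := by
  generalize (fun i => EuclideanSpace.single i 1 : Fin 6 → EuclideanSpace 𝕜 (Fin 6)) = e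
  beta_reduce
  have hy : vee ![e 0, e 1, e 5] + vee ![e 0, e 2, e 4] + vee ![e 1, e 2, e 3] =
      vee ![e 3, e 1, e 2] + vee ![e 0, e 4, e 2] + vee ![e 0, e 1, e 5] := by
    rw [vee_rotate (e 3), vee_swap_right (e 0) (e 2)]
    abel
  rw [hy]
  refine ⟨fun m => ⟨_, _, smul_vee_sub_smul_vee _ _ _ _ _⟩, fun m hm => ?_,
    tendsto_natCast_smul_vee_add_inv_smul_sub _ _ _ _ _ _⟩
  rw [smul_vee_add_inv_smul_sub _ _ _ _ _ _ (Nat.cast_ne_zero.2 (by omega)),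
    ← vee_rotate (e 2) (e 3) (e 4), vee_swap_left (e 3) (e 1) (e 5)]
  abel
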